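/- Let (ψ, ψ_2, …, ψ_K) be an orthonormal family in ℂ^d and let n ≥ 1. For μ = 1, …, n let λ_μ ∈ (0,1] and let p_{k,μ} ≥ 0 (k = 2,…,K) satisfy ∑_k p_{k,μ} = 1, and define ρ_μ = λ_μ·|ψ⟩⟨ψ| + (1−λ_μ)·∑_{k=2}^K p_{k,μ}·|ψ_k⟩⟨ψ_k|. Then for every d×d complex matrix σ: Tr[(ρ_1 ρ_2 ⋯ ρ_n)·σ] = (∏_{μ=1}^n λ_μ)·⟨ψ, σψ⟩ + ∑_{k=2}^K (∏_{μ=1}^n (1−λ_μ)·p_{k,μ})·⟨ψ_k, σψ_k⟩. Moreover, if ‖σ‖ ≤ 1 (operator norm), λ_min := min_μ λ_μ, and p_{k,max} := max_μ p_{k,μ}, then |Tr[(ρ_1⋯ρ_n)σ]/(∏_μ λ_μ) − ⟨ψ, σψ⟩| ≤ ((1−λ_min)/λ_min)^n · ∑_{k=2}^K p_{k,max}^n. -/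

import Mathlib

/-!
Every copy `ρ_μ` is diagonal in the single orthonormal family `(ψ, ψ_2, …, ψ_K)`, so the product
`ρ_1 ⋯ ρ_n` is diagonal in it too, with the products of the eigenvalues as entries; pairing with `σ`
gives the trace formula. After dividing by `∏ λ_μ`, what remains is
`∑_k ∏_μ ((1 - λ_μ) p_{k,μ} / λ_μ) ⟨ψ_k, σ ψ_k⟩`: each quadratic form is bounded by `‖σ‖ ≤ 1`
and each factor by `(1 - λ_min) / λ_min · p_{k,max}`, since `(1 - x) / x` decreases on `(0, 1]`.
-/

open Matrix

namespace Matrix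

variable {ι m R : Type*} [Fintype ι] [Fintype m]

theorem trace_vecMulVec_mul [CommSemiring R] (v w : m → R) (A : Matrix m m R) :
    (vecMulVec v w * A).trace = w ⬝ᵥ A *ᵥ v := by
  rw [vecMulVec_mul, trace_vecMulVec, dotProduct_mulVec, dotProduct_comm]

def diagonalIn [CommSemiring R] [Star R] (u : ι → m → R) (c : ι → R) : Matrix m m R :=
  ∑ i, c i • vecMulVec (u i) (star (u i))

section diagonalIn

variable [CommSemiring R] [Star R] {u : ι → m → R}

theorem diagonalIn_mul_diagonalIn [DecidableEq ι]
    (hu : ∀ i j, star (u i) ⬝ᵥ u j = if i = j then 1 else 0) (c e : ι → R) :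
    diagonalIn u c * diagonalIn u e = diagonalIn u (c * e) := by
  simp only [diagonalIn, Finset.sum_mul, Finset.mul_sum, smul_mul_smul_comm,
    vecMulVec_mul_vecMulVec, hu, ite_smul, one_smul, zero_smul, apply_ite (vecMulVec _),
    vecMulVec_zero, smul_ite, smul_zero, Finset.sum_ite_eq', Finset.mem_univ, if_true, Pi.mul_apply]

/- Stated for `n + 1` factors: the empty product `1` is `diagonalIn u 1` only for a complete
family `u`. -/
theorem list_prod_ofFn_diagonalIn [DecidableEq ι] [DecidableEq m]
    (hu : ∀ i j, star (u i) ⬝ᵥ u j = if i = j then 1 else 0) {n : ℕ} (c : Fin (n + 1) → ι → R) :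
    (List.ofFn fun μ => diagonalIn u (c μ)).prod = diagonalIn u (∏ μ, c μ) := by
  induction n with
  | zero => simp
  | succ n ih =>
    rw [List.ofFn_succ, List.prod_cons, ih (fun μ => c μ.succ), diagonalIn_mul_diagonalIn hu,
      ← Fin.prod_univ_succ]

theorem trace_diagonalIn_mul (u : ι → m → R) (c : ι → R) (A : Matrix m m R) :
    (diagonalIn u c * A).trace = ∑ i, c i * (star (u i) ⬝ᵥ A *ᵥ u i) := by
  simp only [diagonalIn, Finset.sum_mul, trace_sum, smul_mul_assoc, trace_smul,
    trace_vecMulVec_mul, smul_eq_mul]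

end diagonalIn

theorem norm_star_dotProduct_mulVec_le {𝕜 : Type*} [RCLike 𝕜] [DecidableEq m] (A : Matrix m m 𝕜)
    {v : m → 𝕜} (hv : star v ⬝ᵥ v = 1) :
    ‖star v ⬝ᵥ A *ᵥ v‖ ≤ ‖toEuclideanCLM (𝕜 := 𝕜) A‖ := by
  set x : EuclideanSpace 𝕜 m := WithLp.toLp 2 v
  have hx : ‖x‖ = 1 := by
    have : ‖x‖ ^ 2 = 1 := by
      rw [@norm_sq_eq_re_inner 𝕜, EuclideanSpace.inner_toLp_toLp, dotProduct_comm, hv]; simp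
    nlinarith [norm_nonneg x]
  calc ‖star v ⬝ᵥ A *ᵥ v‖ = ‖inner 𝕜 x (toEuclideanCLM (𝕜 := 𝕜) A x)‖ := by
        rw [toEuclideanCLM_toLp, EuclideanSpace.inner_toLp_toLp, dotProduct_comm]
    _ ≤ ‖x‖ * (‖toEuclideanCLM (𝕜 := 𝕜) A‖ * ‖x‖) :=
        (norm_inner_le_norm _ _).trans (by gcongr; exact (toEuclideanCLM (𝕜 := 𝕜) A).le_opNorm x)
    _ = ‖toEuclideanCLM (𝕜 := 𝕜) A‖ := by rw [hx, one_mul, mul_one]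

end Matrix

theorem orthonormal_option_elim {ι m R : Type*} [Fintype m] [CommSemiring R] [StarRing R]
    [DecidableEq ι] {ψ : m → R} {ψe : ι → m → R} (hψ : star ψ ⬝ᵥ ψ = 1)
    (horth : ∀ k, star ψ ⬝ᵥ ψe k = 0)
    (he : ∀ k l, star (ψe k) ⬝ᵥ ψe l = if k = l then 1 else 0) (i j : Option ι) :
    star (i.elim ψ ψe) ⬝ᵥ j.elim ψ ψe = if i = j then 1 else 0 := by
  have horth' (k : ι) : star (ψe k) ⬝ᵥ ψ = 0 := by rw [star_dotProduct, horth, star_zero]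
  cases i <;> cases j <;> simp [hψ, horth, horth', he]

theorem one_sub_mul_div_le {a b q r : ℝ} (ha : 0 < a) (hab : a ≤ b) (hb : b ≤ 1)
    (hq : 0 ≤ q) (hqr : q ≤ r) : (1 - b) * q / b ≤ (1 - a) / a * r := by
  have hba : (1 - b) / b ≤ (1 - a) / a := by
    rw [div_le_div_iff₀ (ha.trans_le hab) ha]; nlinarith
  rw [mul_div_right_comm]
  exact mul_le_mul hba hqr hq (div_nonneg (by linarith) ha.le)

theorem abs_prod_one_sub_mul_div_le {ι : Type*} [Fintype ι] {lam q : ι → ℝ} {a r : ℝ}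
    (ha : 0 < a) (hal : ∀ μ, a ≤ lam μ) (hl1 : ∀ μ, lam μ ≤ 1) (hq : ∀ μ, 0 ≤ q μ)
    (hqr : ∀ μ, q μ ≤ r) :
    |∏ μ, (1 - lam μ) * q μ / lam μ| ≤ ((1 - a) / a * r) ^ Fintype.card ι := by
  have hnonneg (μ : ι) : 0 ≤ (1 - lam μ) * q μ / lam μ :=
    div_nonneg (mul_nonneg (sub_nonneg.2 (hl1 μ)) (hq μ)) (ha.trans_le (hal μ)).le
  rw [abs_of_nonneg (Finset.prod_nonneg fun μ _ => hnonneg μ), ← Finset.card_univ,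
    ← Finset.prod_const]
  exact Finset.prod_le_prod (fun μ _ => hnonneg μ) fun μ _ =>
    one_sub_mul_div_le ha (hal μ) (hl1 μ) (hq μ) (hqr μ)

theorem nonidentical_commuting_copies_general {d K : ℕ} (n : ℕ) (hn : 1 ≤ n)
    (ψ : Fin d → ℂ) (ψe : Fin K → Fin d → ℂ)
    (hψ : star ψ ⬝ᵥ ψ = 1)
    (horth : ∀ k, star ψ ⬝ᵥ ψe k = 0)
    (he : ∀ k l, star (ψe k) ⬝ᵥ ψe l = if k = l then 1 else 0)
    (lam : Fin n → ℝ) (hlam : ∀ μ, lam μ ∈ Set.Ioc (0 : ℝ) 1)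
    (p : Fin K → Fin n → ℝ) (hp : ∀ k μ, 0 ≤ p k μ)
    (σ : Matrix (Fin d) (Fin d) ℂ) :
    let ρ : Fin n → Matrix (Fin d) (Fin d) ℂ := fun μ =>
      (lam μ : ℂ) • vecMulVec ψ (star ψ) +
        ((1 : ℂ) - (lam μ : ℂ)) • ∑ k, (p k μ : ℂ) • vecMulVec (ψe k) (star (ψe k))
    (((List.ofFn ρ).prod * σ).trace
        = (∏ μ, (lam μ : ℂ)) * (star ψ ⬝ᵥ σ.mulVec ψ) +
          ∑ k, (∏ μ, ((1 : ℂ) - (lam μ : ℂ)) * (p k μ : ℂ)) *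
            (star (ψe k) ⬝ᵥ σ.mulVec (ψe k))) ∧
    (‖Matrix.toEuclideanCLM (𝕜 := ℂ) σ‖ ≤ 1 →
      ∀ lmin : ℝ, IsLeast (Set.range lam) lmin →
      ∀ pmax : Fin K → ℝ, (∀ k, IsGreatest (Set.range (p k)) (pmax k)) →
      ‖((List.ofFn ρ).prod * σ).trace / (∏ μ, (lam μ : ℂ)) -
          star ψ ⬝ᵥ σ.mulVec ψ‖
        ≤ ((1 - lmin) / lmin) ^ n * ∑ k, pmax k ^ n) := by
  obtain ⟨n, rfl⟩ : ∃ m, n = m + 1 := ⟨n - 1, by omega⟩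
  intro ρ
  let u (i : Option (Fin K)) : Fin d → ℂ := i.elim ψ ψe
  let c (μ : Fin (n + 1)) (i : Option (Fin K)) : ℂ := i.elim (lam μ) fun k => (1 - lam μ) * p k μ
  have hρ : ρ = fun μ => diagonalIn u (c μ) := by
    funext μ
    simp only [ρ, diagonalIn, Fintype.sum_option, Finset.smul_sum, smul_smul]
    rfl
  have htrace : ((List.ofFn ρ).prod * σ).trace = (∏ μ, (lam μ : ℂ)) * (star ψ ⬝ᵥ σ *ᵥ ψ) +
      ∑ k, (∏ μ, (1 - (lam μ : ℂ)) * p k μ) * (star (ψe k) ⬝ᵥ σ *ᵥ ψe k) := by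
    rw [hρ, list_prod_ofFn_diagonalIn (orthonormal_option_elim hψ horth he), trace_diagonalIn_mul,
      Fintype.sum_option]
    simp only [Finset.prod_apply, c, Option.elim]
  refine ⟨htrace, fun hσ lmin hlmin pmax hpmax => ?_⟩
  have hΛ : (∏ μ, (lam μ : ℂ)) ≠ 0 :=
    Finset.prod_ne_zero_iff.2 fun μ _ => Complex.ofReal_ne_zero.2 (hlam μ).1.ne'
  have hdiff : ((List.ofFn ρ).prod * σ).trace / (∏ μ, (lam μ : ℂ)) - star ψ ⬝ᵥ σ *ᵥ ψ =
      ∑ k, ((∏ μ, (1 - lam μ) * p k μ / lam μ : ℝ) : ℂ) * (star (ψe k) ⬝ᵥ σ *ᵥ ψe k) := by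
    rw [htrace, add_div, mul_div_cancel_left₀ _ hΛ, add_sub_cancel_left, Finset.sum_div]
    push_cast
    simp only [Finset.prod_div_distrib, div_mul_eq_mul_div]
  obtain ⟨μ₀, rfl⟩ := hlmin.1
  rw [hdiff, Finset.mul_sum]
  refine norm_sum_le_of_le _ fun k _ => ?_
  rw [norm_mul, Complex.norm_real, Real.norm_eq_abs]
  calc |∏ μ, (1 - lam μ) * p k μ / lam μ| * ‖star (ψe k) ⬝ᵥ σ *ᵥ ψe k‖
      ≤ |∏ μ, (1 - lam μ) * p k μ / lam μ| :=
        mul_le_of_le_one_right (abs_nonneg _)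
          ((norm_star_dotProduct_mulVec_le σ (by simpa using he k k)).trans hσ)
    _ ≤ ((1 - lam μ₀) / lam μ₀ * pmax k) ^ Fintype.card (Fin (n + 1)) :=
        abs_prod_one_sub_mul_div_le (hlam μ₀).1 (fun μ => hlmin.2 ⟨μ, rfl⟩) (fun μ => (hlam μ).2)
          (hp k) (fun μ => (hpmax k).2 ⟨μ, rfl⟩)
    _ = _ := by rw [Fintype.card_fin, mul_pow]

/-- commuting case of the lemma on non-identical copies: for copies
`ρ_μ = λ_μ|ψ⟩⟨ψ| + (1−λ_μ)∑_k p_{k,μ}|ψ_k⟩⟨ψ_k|` sharing the orthonormal eigenvectors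
`(ψ, ψ_2, …, ψ_K)`: `Tr[(ρ_1⋯ρ_n)σ] = (∏_μ λ_μ)⟨ψ,σψ⟩ + ∑_k (∏_μ (1−λ_μ)p_{k,μ})⟨ψ_k,σψ_k⟩`;
moreover if `‖σ‖ ≤ 1`, `λ_min = min_μ λ_μ` and `p_{k,max} = max_μ p_{k,μ}`, then
`|Tr[(ρ_1⋯ρ_n)σ]/(∏_μ λ_μ) − ⟨ψ,σψ⟩| ≤ ((1−λ_min)/λ_min)^n ∑_k p_{k,max}^n`. -/
theorem nonidentical_commuting_copies {d K : ℕ} (n : ℕ) (hn : 1 ≤ n)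
    (ψ : Fin d → ℂ) (ψe : Fin K → Fin d → ℂ)
    (hψ : star ψ ⬝ᵥ ψ = 1)
    (horth : ∀ k, star ψ ⬝ᵥ ψe k = 0)
    (he : ∀ k l, star (ψe k) ⬝ᵥ ψe l = if k = l then 1 else 0)
    (lam : Fin n → ℝ) (hlam : ∀ μ, lam μ ∈ Set.Ioc (0 : ℝ) 1)
    (p : Fin K → Fin n → ℝ) (hp : ∀ k μ, 0 ≤ p k μ)
    (hsum : ∀ μ, ∑ k, p k μ = 1)
    (σ : Matrix (Fin d) (Fin d) ℂ) :
    let ρ : Fin n → Matrix (Fin d) (Fin d) ℂ := fun μ =>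
      (lam μ : ℂ) • vecMulVec ψ (star ψ) +
        ((1 : ℂ) - (lam μ : ℂ)) • ∑ k, (p k μ : ℂ) • vecMulVec (ψe k) (star (ψe k))
    (((List.ofFn ρ).prod * σ).trace
        = (∏ μ, (lam μ : ℂ)) * (star ψ ⬝ᵥ σ.mulVec ψ) +
          ∑ k, (∏ μ, ((1 : ℂ) - (lam μ : ℂ)) * (p k μ : ℂ)) *
            (star (ψe k) ⬝ᵥ σ.mulVec (ψe k))) ∧
    (‖Matrix.toEuclideanCLM (𝕜 := ℂ) σ‖ ≤ 1 →
      ∀ lmin : ℝ, IsLeast (Set.range lam) lmin →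
      ∀ pmax : Fin K → ℝ, (∀ k, IsGreatest (Set.range (p k)) (pmax k)) →
      ‖((List.ofFn ρ).prod * σ).trace / (∏ μ, (lam μ : ℂ)) -
          star ψ ⬝ᵥ σ.mulVec ψ‖
        ≤ ((1 - lmin) / lmin) ^ n * ∑ k, pmax k ^ n) :=
  nonidentical_commuting_copies_general n hn ψ ψe hψ horth he lam hlam p hp σ
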